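/- Every bijection f : ℝ^d → ℝ^d (d ≥ 1) that preserves the quadratic Minkowski form of differences, i.e., satisfies Q(f(p) - f(q)) = Q(p - q) for all p, q where Q(x) = x₁² - (x₂² + ... + x_d²), is an affine map (a linear transformation composed with a translation). -/

import Mathlib

/-!
Translate so that `f 0 = 0`; polarization then shows that the translated map `g` preserves the
Minkowski bilinear form `B` itself. By surjectivity every vector is some `g r`, and
`B (g (p + q) - g p - g q) (g r) = B (p + q - p - q) r = 0` (likewise for scalars), so
nondegeneracy of `B` forces `g` to be linear.
-/

open Function

namespace LinearMap.BilinForm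

variable {R M : Type*} [CommRing R] [AddCommGroup M] [Module R M] {B : LinearMap.BilinForm R M}

theorem apply_sub_sub_self (hB : B.IsSymm) (x y : M) :
    B (x - y) (x - y) = B x x - 2 * B x y + B y y := by
  rw [map_sub₂, map_sub, map_sub, hB.eq y x]
  ring

theorem apply_apply_eq_of_apply_sub_sub_eq [Invertible (2 : R)] (hB : B.IsSymm) {g : M → M}
    (hg₀ : g 0 = 0) (hg : ∀ p q, B (g p - g q) (g p - g q) = B (p - q) (p - q)) (p q : M) :
    B (g p) (g q) = B p q := by
  have hself (x : M) : B (g x) (g x) = B x x := by simpa [hg₀] using hg x 0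
  have h := hg p q
  rw [apply_sub_sub_self hB, apply_sub_sub_self hB, hself, hself] at h
  exact (isUnit_of_invertible (2 : R)).mul_left_cancel (by linear_combination -h)

theorem isLinearMap_of_surjective_of_apply_apply_eq (hB : B.SeparatingLeft) {g : M → M}
    (hg : Surjective g) (hgB : ∀ p q, B (g p) (g q) = B p q) : IsLinearMap R g := by
  have hsep (x y : M) (h : ∀ r, B x (g r) = B y (g r)) : x = y :=
    sub_eq_zero.mp <| hB _ fun z ↦ by
      obtain ⟨r, rfl⟩ := hg z
      rw [map_sub₂, h, sub_self]
  refine ⟨fun p q ↦ hsep _ _ fun r ↦ ?_, fun c p ↦ hsep _ _ fun r ↦ ?_⟩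
  · rw [map_add₂, hgB, hgB, hgB, map_add₂]
  · rw [map_smul₂, hgB, hgB, map_smul₂]

theorem exists_eq_linearMap_add_of_surjective [Invertible (2 : R)] (hB : B.IsSymm)
    (hsep : B.SeparatingLeft) {f : M → M} (hf : Surjective f)
    (hfB : ∀ p q, B (f p - f q) (f p - f q) = B (p - q) (p - q)) :
    ∃ (L : M →ₗ[R] M) (t : M), ∀ x, f x = L x + t := by
  set g : M → M := fun x ↦ f x - f 0
  have hg : Surjective g := fun y ↦
    let ⟨x, hx⟩ := hf (y + f 0)
    ⟨x, by simp [g, hx]⟩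
  have hgB : ∀ p q, B (g p - g q) (g p - g q) = B (p - q) (p - q) := by
    simpa [g] using hfB
  have hlin := isLinearMap_of_surjective_of_apply_apply_eq hsep hg
    (apply_apply_eq_of_apply_sub_sub_eq hB (sub_self _) hgB)
  exact ⟨hlin.mk' g, f 0, fun x ↦ (sub_add_cancel _ _).symm⟩

end LinearMap.BilinForm

section Minkowski

variable (R : Type*) [CommRing R] {ι : Type*} [Fintype ι] [DecidableEq ι]

def minkowskiForm (i₀ : ι) : LinearMap.BilinForm R (ι → R) :=
  Matrix.toBilin' (Matrix.diagonal fun i ↦ if i = i₀ then 1 else -1)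

theorem minkowskiForm_apply_self (i₀ : ι) (x : ι → R) :
    minkowskiForm R i₀ x x = x i₀ ^ 2 - ∑ i ∈ Finset.univ \ {i₀}, x i ^ 2 := by
  simp only [minkowskiForm, Matrix.toBilin'_apply', Matrix.mulVec_diagonal, dotProduct]
  rw [← Finset.add_sum_erase _ _ (Finset.mem_univ i₀), ← Finset.sdiff_singleton_eq_erase,
    if_pos rfl, sub_eq_add_neg, ← Finset.sum_neg_distrib]
  congr 1
  · ring
  · refine Finset.sum_congr rfl fun i hi ↦ ?_
    rw [if_neg (Finset.notMem_singleton.mp (Finset.mem_sdiff.mp hi).2)]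
    ring

theorem minkowskiForm_isSymm (i₀ : ι) : (minkowskiForm R i₀).IsSymm :=
  Matrix.isSymm_toBilin'_iff_isSymm.mpr (Matrix.isSymm_diagonal _)

theorem minkowskiForm_separatingLeft (i₀ : ι) :
    (minkowskiForm R i₀).SeparatingLeft := by
  intro w hw
  funext j
  have := hw (Pi.single j 1)
  simp only [minkowskiForm, Matrix.toBilin'_apply', Matrix.mulVec_single, MulOpposite.op_one,
    Matrix.col_diagonal, one_smul, dotProduct_single, mul_ite, mul_one, mul_neg] at this
  split_ifs at this <;> simpa using this

end Minkowski

/-- Every bijection of ℝ^d (d ≥ 1) preserving the Minkowski quadratic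
form of differences is affine: a linear map composed with a translation. -/
theorem stmt_4 (d : ℕ) (hd : 1 ≤ d) (f : (Fin d → ℝ) → (Fin d → ℝ))
    (hbij : Function.Bijective f)
    (Q : (Fin d → ℝ) → ℝ)
    (hQ : ∀ x, Q x = (x ⟨0, hd⟩) ^ 2 - ∑ i ∈ Finset.univ \ {⟨0, hd⟩}, (x i) ^ 2)
    (hpres : ∀ p q, Q (f p - f q) = Q (p - q)) :
    ∃ (L : (Fin d → ℝ) →ₗ[ℝ] (Fin d → ℝ)) (t : Fin d → ℝ), ∀ x, f x = L x + t := by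
  have hQB (x : Fin d → ℝ) : Q x = minkowskiForm ℝ ⟨0, hd⟩ x x := by
    rw [hQ, minkowskiForm_apply_self]
  refine LinearMap.BilinForm.exists_eq_linearMap_add_of_surjective
    (minkowskiForm_isSymm ℝ ⟨0, hd⟩) (minkowskiForm_separatingLeft ℝ _) hbij.surjective
    fun p q ↦ ?_
  rw [← hQB, ← hQB, hpres]
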